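/- arXiv:2307.10299 — 4 statements merged into one kernel-verified Lean document; each statement's English description precedes it below -/
import Mathlib

section
/- Let $\{(\mu^e, S^e)\}_{e \in \mathcal{E}}$ be a finite family with $\mu^e \in \mathbb{R}^{p+1}$, $S^e$ symmetric PSD of size $(p+1)$, and weights $\omega^e > 0$ summing to $1$, with $\mu^0 = 0$. For $\gamma \ge 1$ define the anchor set $\mathcal{C}_{\mathrm{anchor}}^\gamma := \{M \succeq 0 : M \preceq \sum_e \omega^e (S^e + \gamma \mu^e{\mu^e}^\top)\}$ and the DRIG set $\mathcal{C}_{\mathrm{DRIG}}^\gamma := \{M \succeq 0 : M \preceq S^0 + \gamma\sum_e \omega^e(S^e - S^0 + \mu^e{\mu^e}^\top)\}$. Then $\mathcal{C}_{\mathrm{anchor}}^\gamma \subseteq \mathcal{C}_{\mathrm{DRIG}}^\gamma$. -/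
open Matrix Finset

/-! The DRIG bound exceeds the anchor bound by `(γ - 1) (∑ ω_e S_e - S_0)`, which is positive
semidefinite when `γ ≥ 1`, so every `M` below the anchor bound is below the DRIG bound. -/

theorem add_smul_sum_smul_sub_add_eq {R M ι : Type*} [CommRing R] [AddCommGroup M] [Module R M]
    (s : Finset ι) (ω : ι → R) (hω : ∑ e ∈ s, ω e = 1) (S V : ι → M) (S₀ : M) (γ : R) :
    S₀ + γ • ∑ e ∈ s, ω e • (S e - S₀ + V e)
      = ∑ e ∈ s, ω e • (S e + γ • V e) + (γ - 1) • (∑ e ∈ s, ω e • S e - S₀) := by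
  have hS₀ : ∑ e ∈ s, ω e • S₀ = S₀ := by rw [← Finset.sum_smul, hω, one_smul]
  simp only [smul_add, smul_sub, Finset.sum_add_distrib, Finset.sum_sub_distrib, hS₀,
    smul_comm (ω _) γ, ← Finset.smul_sum]
  module

theorem anchor_class_subset_drig_class_general {p : ℕ} {ι : Type*} [Fintype ι] (e₀ : ι)
    (μ : ι → Fin (p + 1) → ℝ) (S : ι → Matrix (Fin (p + 1)) (Fin (p + 1)) ℝ)
    (ω : ι → ℝ) (hωsum : ∑ e, ω e = 1)
    (hdom : ((∑ e, ω e • S e) - S e₀).PosSemidef)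
    (γ : ℝ) (hγ : 1 ≤ γ) :
    ∀ M : Matrix (Fin (p + 1)) (Fin (p + 1)) ℝ, M.PosSemidef →
      ((∑ e, ω e • (S e + γ • vecMulVec (μ e) (μ e))) - M).PosSemidef →
      ((S e₀ + γ • ∑ e, ω e • (S e - S e₀ + vecMulVec (μ e) (μ e))) - M).PosSemidef := by
  intro M _ hanchor
  rw [add_smul_sum_smul_sub_add_eq _ _ hωsum, add_sub_right_comm]
  exact hanchor.add (hdom.smul (sub_nonneg.mpr hγ))

/-- The anchor regression perturbation class is contained in the DRIG perturbation class
for `γ ≥ 1`. -/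
theorem anchor_class_subset_drig_class {p : ℕ} {ι : Type*} [Fintype ι] (e₀ : ι)
    (μ : ι → Fin (p + 1) → ℝ) (S : ι → Matrix (Fin (p + 1)) (Fin (p + 1)) ℝ)
    (ω : ι → ℝ) (hωpos : ∀ e, 0 < ω e) (hωsum : ∑ e, ω e = 1)
    (hS : ∀ e, (S e).PosSemidef) (hμ0 : μ e₀ = 0)
    (hdom : ((∑ e, ω e • S e) - S e₀).PosSemidef)
    (γ : ℝ) (hγ : 1 ≤ γ) :
    ∀ M : Matrix (Fin (p + 1)) (Fin (p + 1)) ℝ, M.PosSemidef →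
      ((∑ e, ω e • (S e + γ • vecMulVec (μ e) (μ e))) - M).PosSemidef →
      ((S e₀ + γ • ∑ e, ω e • (S e - S e₀ + vecMulVec (μ e) (μ e))) - M).PosSemidef :=
  anchor_class_subset_drig_class_general e₀ μ S ω hωsum hdom γ hγ
end

section
/- In the linear SCM $Z^e = B^\star Z^e + \varepsilon + \delta^e$ (with $I - B^\star$ invertible, $\varepsilon \perp \delta^e$, $\mathbb{E}[\varepsilon\,{\delta^e}^\top]=0$, finite second moments), let $S^e = \mathrm{Cov}(\delta^e)$, $\mu^e = \mathbb{E}[\delta^e]$, $\mu^0=0$, weights $\omega^e>0$ summing to one, and for $\gamma\ge 0$ define the DRIG risk $\mathcal{L}_\gamma(b) = \mathbb{E}[(Y^0 - b^\top X^0)^2] + \gamma\sum_e \omega^e\big(\mathbb{E}[(Y^e - b^\top X^e)^2] - \mathbb{E}[(Y^0 - b^\top X^0)^2]\big)$. Consider test data $Z^v = B^\star Z^v + \varepsilon + v$ where $v$ is independent of $\varepsilon$ with $\mathbb{E}[\varepsilon v^\top]=0$. Then $\sup_{v : \mathbb{E}[vv^\top] \preceq U(\gamma)} \mathbb{E}[(Y^v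 - b^\top X^v)^2] = \mathcal{L}_\gamma(b)$ for every $b \in \mathbb{R}^p$, where $U(\gamma) = S^0 + \gamma\sum_e\omega^e(S^e - S^0 + \mu^e{\mu^e}^\top)$ and the supremum is over all random vectors $v$ with $\mathbb{E}[vv^\top] \preceq U(\gamma)$. -/
open Matrix MeasureTheory Finset

/-!
The residual of `b` under an additive shift `v` is `Y - bᵀX = wᵀ(ε + v)` with
`w = (I - B)⁻ᵀ (-b, 1)`, so for `v` uncorrelated with `ε` its mean square is
`wᵀ 𝔼[εεᵀ] w + wᵀ 𝔼[vvᵀ] w`. As `μ⁰ = 0`, `U(γ) = M⁰ + γ (∑ₑ ωᵉ Mᵉ - M⁰)` with `Mᵉ = 𝔼[δᵉδᵉᵀ]`,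
hence `L_γ(b) = wᵀ 𝔼[εεᵀ] w + wᵀ U w`, and `U ⪰ 0` by the dominance assumption. The theorem thus
reduces to `sup {wᵀ M w : M ⪯ U} = wᵀ U w`: the bound is the Loewner order, and it is attained by
the deterministic shift `v = (wᵀUw)^(-1/2) U w`, for which `U ⪰ vvᵀ` is Cauchy–Schwarz for the
semi-inner product defined by `U`.
-/

namespace Matrix

variable {n : Type*}

lemma add_smul_sum_covariance_shift_eq {ι : Type*} [Fintype ι] {ωw : ι → ℝ}
    (hωsum : ∑ e, ωw e = 1) {e₀ : ι}
    {M S : ι → Matrix n n ℝ} {μ : ι → n → ℝ} (hS : ∀ e, S e = M e - vecMulVec (μ e) (μ e))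
    (hμ0 : μ e₀ = 0) (γ : ℝ) :
    S e₀ + γ • ∑ e, ωw e • (S e - S e₀ + vecMulVec (μ e) (μ e))
      = M e₀ + γ • (∑ e, ωw e • M e - M e₀) := by
  have hS0 : S e₀ = M e₀ := by rw [hS, hμ0, vecMulVec_zero, sub_zero]
  have hshift : ∀ e, S e - S e₀ + vecMulVec (μ e) (μ e) = M e - M e₀ := fun e => by
    rw [hS0, hS]; abel
  simp only [hshift, smul_sub, sum_sub_distrib, ← sum_smul, hωsum, one_smul]
  rw [hS0]

variable [Fintype n]

lemma dotProduct_mulVec_add_smul_sum_sub {ι : Type*} [Fintype ι] {ωw : ι → ℝ}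
    (hωsum : ∑ e, ωw e = 1) (M₀ : Matrix n n ℝ)
    (M : ι → Matrix n n ℝ) (γ : ℝ) (x : n → ℝ) :
    x ⬝ᵥ (M₀ + γ • (∑ e, ωw e • M e - M₀)) *ᵥ x
      = x ⬝ᵥ M₀ *ᵥ x + γ * ∑ e, ωw e * (x ⬝ᵥ M e *ᵥ x - x ⬝ᵥ M₀ *ᵥ x) := by
  simp only [add_mulVec, smul_mulVec, sub_mulVec, sum_mulVec, dotProduct_add, dotProduct_smul,
    dotProduct_sub, dotProduct_sum, smul_eq_mul, mul_sub, sum_sub_distrib, ← sum_mul, hωsum,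
    one_mul]

lemma IsHermitian.dotProduct_mulVec_comm {U : Matrix n n ℝ} (hU : U.IsHermitian) (x y : n → ℝ) :
    x ⬝ᵥ U *ᵥ y = y ⬝ᵥ U *ᵥ x := by
  rw [dotProduct_mulVec, ← mulVec_transpose, (isHermitian_iff_isSymm.mp hU).eq, dotProduct_comm]

lemma dotProduct_vecMulVec_self_mulVec (x c : n → ℝ) : x ⬝ᵥ vecMulVec c c *ᵥ x = (x ⬝ᵥ c) ^ 2 := by
  rw [vecMulVec_mulVec, op_smul_eq_smul, dotProduct_smul, smul_eq_mul, dotProduct_comm c, sq]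

lemma dotProduct_mulVec_le_of_posSemidef_sub {U M : Matrix n n ℝ} (h : (U - M).PosSemidef)
    (x : n → ℝ) : x ⬝ᵥ M *ᵥ x ≤ x ⬝ᵥ U *ᵥ x := by
  have := h.dotProduct_mulVec_nonneg x
  rw [star_trivial, sub_mulVec, dotProduct_sub] at this
  linarith

lemma PosSemidef.sq_dotProduct_mulVec_le {U : Matrix n n ℝ} (hU : U.PosSemidef) (x y : n → ℝ) :
    (x ⬝ᵥ U *ᵥ y) ^ 2 ≤ (x ⬝ᵥ U *ᵥ x) * (y ⬝ᵥ U *ᵥ y) := by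
  have hquad : ∀ s : ℝ,
      0 ≤ (y ⬝ᵥ U *ᵥ y) * (s * s) + 2 * (x ⬝ᵥ U *ᵥ y) * s + x ⬝ᵥ U *ᵥ x := fun s => by
    have := hU.dotProduct_mulVec_nonneg (x + s • y)
    simp only [star_trivial, mulVec_add, mulVec_smul, add_dotProduct, dotProduct_add,
      smul_dotProduct, dotProduct_smul, smul_eq_mul, hU.1.dotProduct_mulVec_comm y x] at this
    linarith
  have := discrim_le_zero hquad
  rw [discrim] at this
  linarith

lemma PosSemidef.exists_posSemidef_sub_vecMulVec {U : Matrix n n ℝ} (hU : U.PosSemidef)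
    (w : n → ℝ) :
    ∃ c : n → ℝ, (U - vecMulVec c c).PosSemidef ∧ w ⬝ᵥ vecMulVec c c *ᵥ w = w ⬝ᵥ U *ᵥ w := by
  set t := w ⬝ᵥ U *ᵥ w
  have ht : 0 ≤ t := by simpa using hU.dotProduct_mulVec_nonneg w
  have hc : ∀ x, x ⬝ᵥ vecMulVec ((√t)⁻¹ • U *ᵥ w) ((√t)⁻¹ • U *ᵥ w) *ᵥ x
      = (x ⬝ᵥ U *ᵥ w) ^ 2 / t := fun x => by
    rw [dotProduct_vecMulVec_self_mulVec, dotProduct_smul, smul_eq_mul, mul_pow, inv_pow,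
      Real.sq_sqrt ht, inv_mul_eq_div]
  -- If `t = 0` then `(√t)⁻¹ = 0`, so the witness is `0`.
  refine ⟨(√t)⁻¹ • U *ᵥ w, .of_dotProduct_mulVec_nonneg ?_ fun x => ?_, ?_⟩
  · simpa using hU.1.sub (posSemidef_vecMulVec_self_star ((√t)⁻¹ • U *ᵥ w)).1
  · rw [star_trivial, sub_mulVec, dotProduct_sub, hc, sub_nonneg]
    exact div_le_of_le_mul₀ ht (by simpa using hU.dotProduct_mulVec_nonneg x)
      (hU.sq_dotProduct_mulVec_le x w)
  · rw [hc, sq, mul_self_div_self]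

lemma eq_inv_mulVec_of_eq_mulVec_add [DecidableEq n] {R : Type*} [CommRing R]
    {B : Matrix n n R} (hB : IsUnit (1 - B).det) {z u : n → R} (h : z = B *ᵥ z + u) :
    z = (1 - B)⁻¹ *ᵥ u := by
  have hu : (1 - B) *ᵥ z = u := by
    rw [sub_mulVec, one_mulVec]
    nth_rewrite 1 [h]
    abel
  rw [← hu, mulVec_mulVec, nonsing_inv_mul _ hB, one_mulVec]

end Matrix

section SecondMoment

variable {Ω : Type*} [MeasurableSpace Ω] {P : Measure Ω} {n : Type*} {X Y : Ω → n → ℝ}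

noncomputable def secondMoment (P : Measure Ω) (X : Ω → n → ℝ) : Matrix n n ℝ :=
  Matrix.of fun i j => ∫ ω, X ω i * X ω j ∂P

lemma secondMoment_add (hX : ∀ i j, Integrable (fun ω => X ω i * X ω j) P)
    (hY : ∀ i j, Integrable (fun ω => Y ω i * Y ω j) P)
    (hXY : ∀ i j, Integrable (fun ω => X ω i * Y ω j) P)
    (hXY0 : ∀ i j, ∫ ω, X ω i * Y ω j ∂P = 0) :
    secondMoment P (X + Y) = secondMoment P X + secondMoment P Y := by
  ext i j
  have hexp : (fun ω => (X + Y) ω i * (X + Y) ω j) = fun ω =>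
      (X ω i * X ω j + Y ω i * Y ω j) + (X ω i * Y ω j + X ω j * Y ω i) := by
    funext ω; simp only [Pi.add_apply]; ring
  have hXXYY : Integrable (fun ω => X ω i * X ω j + Y ω i * Y ω j) P := (hX i j).add (hY i j)
  have hXYYX : Integrable (fun ω => X ω i * Y ω j + X ω j * Y ω i) P := (hXY i j).add (hXY j i)
  simp only [secondMoment, of_apply, Matrix.add_apply, hexp]
  rw [integral_add hXXYY hXYYX, integral_add (hX i j) (hY i j), integral_add (hXY i j) (hXY j i),
    hXY0, hXY0, add_zero, add_zero]

lemma secondMoment_const [IsProbabilityMeasure P] (c : n → ℝ) :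
    secondMoment P (fun _ => c) = vecMulVec c c := by
  ext i j
  simp [secondMoment, vecMulVec_apply]

variable [Fintype n]

lemma integral_sq_dotProduct (hX : ∀ i j, Integrable (fun ω => X ω i * X ω j) P)
    (w : n → ℝ) : ∫ ω, (w ⬝ᵥ X ω) ^ 2 ∂P = w ⬝ᵥ secondMoment P X *ᵥ w := by
  have hexp : ∀ ω, (w ⬝ᵥ X ω) ^ 2 = ∑ i, w i * ∑ j, (X ω i * X ω j) * w j := fun ω => by
    rw [sq, dotProduct, Finset.sum_mul_sum]
    exact sum_congr rfl fun i _ => by rw [mul_sum]; exact sum_congr rfl fun j _ => by ring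
  simp_rw [hexp]
  rw [integral_finsetSum _ fun i _ =>
    (integrable_finsetSum _ fun j _ => (hX i j).mul_const _).const_mul _]
  simp_rw [integral_const_mul, integral_finsetSum _ fun j _ => (hX _ j).mul_const _,
    integral_mul_const]
  rfl

lemma secondMoment_posSemidef (hX : ∀ i j, Integrable (fun ω => X ω i * X ω j) P) :
    (secondMoment P X).PosSemidef := by
  refine .of_dotProduct_mulVec_nonneg ?_ fun w => ?_
  · ext i j
    simp only [secondMoment, conjTranspose_apply, of_apply, star_trivial, mul_comm]
  · rw [star_trivial, ← integral_sq_dotProduct hX]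
    exact integral_nonneg fun ω => sq_nonneg _

lemma integral_sq_dotProduct_add (hX : ∀ i j, Integrable (fun ω => X ω i * X ω j) P)
    (hY : ∀ i j, Integrable (fun ω => Y ω i * Y ω j) P)
    (hXY : ∀ i j, Integrable (fun ω => X ω i * Y ω j) P)
    (hXY0 : ∀ i j, ∫ ω, X ω i * Y ω j ∂P = 0) (w : n → ℝ) :
    ∫ ω, (w ⬝ᵥ (X ω + Y ω)) ^ 2 ∂P
      = w ⬝ᵥ secondMoment P X *ᵥ w + w ⬝ᵥ secondMoment P Y *ᵥ w := by
  have hXY2 : ∀ i j, Integrable (fun ω => (X + Y) ω i * (X + Y) ω j) P := fun i j => by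
    refine (((hX i j).add (hY i j)).add ((hXY i j).add (hXY j i))).congr
      (.of_forall fun ω => ?_)
    simp only [Pi.add_apply]; ring
  rw [← dotProduct_add, ← add_mulVec, ← secondMoment_add hX hY hXY hXY0,
    ← integral_sq_dotProduct hXY2]
  rfl

end SecondMoment

def residualCoeffs {p : ℕ} (b : Fin p → ℝ) : Fin (p + 1) → ℝ := Fin.lastCases 1 fun i => -b i

lemma last_sub_sum_castSucc_mulVec {p : ℕ} (A : Matrix (Fin (p + 1)) (Fin (p + 1)) ℝ)
    (b : Fin p → ℝ) (u : Fin (p + 1) → ℝ) :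
    (A *ᵥ u) (Fin.last p) - ∑ i : Fin p, b i * (A *ᵥ u) i.castSucc
      = (residualCoeffs b ᵥ* A) ⬝ᵥ u := by
  rw [← dotProduct_mulVec, dotProduct, Fin.sum_univ_castSucc]
  simp [residualCoeffs]
  ring

lemma integral_sq_last_sub_sum_castSucc_mulVec_add {p : ℕ} {Ω : Type*} [MeasurableSpace Ω]
    {P : Measure Ω} (A : Matrix (Fin (p + 1)) (Fin (p + 1)) ℝ) (b : Fin p → ℝ)
    {X Y : Ω → Fin (p + 1) → ℝ} (hX : ∀ i j, Integrable (fun ω => X ω i * X ω j) P)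
    (hY : ∀ i j, Integrable (fun ω => Y ω i * Y ω j) P)
    (hXY : ∀ i j, Integrable (fun ω => X ω i * Y ω j) P)
    (hXY0 : ∀ i j, ∫ ω, X ω i * Y ω j ∂P = 0) :
    ∫ ω, ((A *ᵥ (X ω + Y ω)) (Fin.last p)
        - ∑ i : Fin p, b i * (A *ᵥ (X ω + Y ω)) i.castSucc) ^ 2 ∂P
      = (residualCoeffs b ᵥ* A) ⬝ᵥ secondMoment P X *ᵥ (residualCoeffs b ᵥ* A)
        + (residualCoeffs b ᵥ* A) ⬝ᵥ secondMoment P Y *ᵥ (residualCoeffs b ᵥ* A) := by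
  simp_rw [last_sub_sum_castSucc_mulVec]
  exact integral_sq_dotProduct_add hX hY hXY hXY0 _

theorem drig_worst_case_risk_general {p : ℕ} {ι : Type*} [Fintype ι] (e₀ : ι)
    {Ω : Type*} [MeasurableSpace Ω] (P : Measure Ω) [IsProbabilityMeasure P]
    (B : Matrix (Fin (p + 1)) (Fin (p + 1)) ℝ) (hB : IsUnit (1 - B).det)
    (ε : Ω → Fin (p + 1) → ℝ) (δ : ι → Ω → Fin (p + 1) → ℝ)
    (hε1 : ∀ i, Integrable (fun ω => ε ω i) P)
    (hε2 : ∀ i j, Integrable (fun ω => ε ω i * ε ω j) P)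
    (hε0 : ∀ i, ∫ ω, ε ω i ∂P = 0)
    (hδ2 : ∀ e i j, Integrable (fun ω => δ e ω i * δ e ω j) P)
    (hεδ : ∀ e i j, Integrable (fun ω => ε ω i * δ e ω j) P)
    (hεδ0 : ∀ e i j, ∫ ω, ε ω i * δ e ω j ∂P = 0)
    (Z : ι → Ω → Fin (p + 1) → ℝ)
    (hZ : ∀ e ω, Z e ω = B *ᵥ Z e ω + ε ω + δ e ω)
    (ωw : ι → ℝ) (hωsum : ∑ e, ωw e = 1)
    -- means and covariances of the training interventions
    (μv : ι → Fin (p + 1) → ℝ)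
    (hμ0 : ∀ i, μv e₀ i = 0)
    (S : ι → Matrix (Fin (p + 1)) (Fin (p + 1)) ℝ)
    (hS : ∀ e, S e = Matrix.of fun i j =>
        (∫ ω, δ e ω i * δ e ω j ∂P) - μv e i * μv e j)
    -- reference-environment dominance assumption
    (hdom : ((∑ e, ωw e • Matrix.of fun i j => ∫ ω, δ e ω i * δ e ω j ∂P)
        - Matrix.of fun i j => ∫ ω, δ e₀ ω i * δ e₀ ω j ∂P).PosSemidef)
    (γ : ℝ) (hγ : 0 ≤ γ) (b : Fin p → ℝ)
    (U : Matrix (Fin (p + 1)) (Fin (p + 1)) ℝ)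
    (hU : U = S e₀ + γ • ∑ e, ωw e • (S e - S e₀ + vecMulVec (μv e) (μv e)))
    (R : ι → Ω → ℝ)
    (hR : ∀ e ω, R e ω = Z e ω (Fin.last p) - ∑ i : Fin p, b i * Z e ω i.castSucc)
    (Lγ : ℝ)
    (hL : Lγ = (∫ ω, (R e₀ ω) ^ 2 ∂P)
        + γ * ∑ e, ωw e * ((∫ ω, (R e ω) ^ 2 ∂P) - ∫ ω, (R e₀ ω) ^ 2 ∂P)) :
    IsLUB { r : ℝ | ∃ v : Ω → Fin (p + 1) → ℝ,
        (∀ i j, Integrable (fun ω => v ω i * v ω j) P) ∧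
        (∀ i j, Integrable (fun ω => ε ω i * v ω j) P) ∧
        (∀ i j, ∫ ω, ε ω i * v ω j ∂P = 0) ∧
        (U - Matrix.of fun i j => ∫ ω, v ω i * v ω j ∂P).PosSemidef ∧
        r = ∫ ω, (((1 - B)⁻¹ *ᵥ (ε ω + v ω)) (Fin.last p)
            - ∑ i : Fin p, b i * ((1 - B)⁻¹ *ᵥ (ε ω + v ω)) i.castSucc) ^ 2 ∂P }
      Lγ := by
  set w := residualCoeffs b ᵥ* (1 - B)⁻¹
  have hrisk : ∀ e, ∫ ω, R e ω ^ 2 ∂P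
      = w ⬝ᵥ secondMoment P ε *ᵥ w + w ⬝ᵥ secondMoment P (δ e) *ᵥ w := fun e => by
    have hZ' : ∀ ω, Z e ω = (1 - B)⁻¹ *ᵥ (ε ω + δ e ω) := fun ω =>
      eq_inv_mulVec_of_eq_mulVec_add hB ((hZ e ω).trans (add_assoc _ _ _))
    simp_rw [hR, hZ']
    exact integral_sq_last_sub_sum_castSucc_mulVec_add _ b hε2 (hδ2 e) (hεδ e) (hεδ0 e)
  have hU_moments : U = secondMoment P (δ e₀)
      + γ • (∑ e, ωw e • secondMoment P (δ e) - secondMoment P (δ e₀)) :=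
    hU.trans (add_smul_sum_covariance_shift_eq hωsum (fun e => hS e) (funext hμ0) γ)
  have hUpsd : U.PosSemidef := hU_moments ▸ (secondMoment_posSemidef (hδ2 e₀)).add (hdom.smul hγ)
  have hL_eq : Lγ = w ⬝ᵥ secondMoment P ε *ᵥ w + w ⬝ᵥ U *ᵥ w := by
    rw [hL, hU_moments, dotProduct_mulVec_add_smul_sum_sub hωsum]
    simp only [hrisk, add_sub_add_left_eq_sub]
    ring
  obtain ⟨c, hcU, hcw⟩ := hUpsd.exists_posSemidef_sub_vecMulVec w
  have hc2 : ∀ i j, Integrable (fun _ : Ω => c i * c j) P := fun i j => integrable_const _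
  have hεc : ∀ i j, Integrable (fun ω => ε ω i * c j) P := fun i j => (hε1 i).mul_const _
  have hεc0 : ∀ i j, ∫ ω, ε ω i * c j ∂P = 0 := fun i j => by
    rw [integral_mul_const, hε0, zero_mul]
  refine IsGreatest.isLUB ⟨⟨fun _ => c, hc2, hεc, hεc0, ?_, ?_⟩, ?_⟩
  · rwa [← secondMoment_const (P := P)] at hcU
  · rw [hL_eq, integral_sq_last_sub_sum_castSucc_mulVec_add _ b hε2 hc2 hεc hεc0,
      secondMoment_const]
    exact congrArg _ hcw.symm
  · rintro r ⟨v, hv, hεv, hεv0, hvU, rfl⟩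
    rw [integral_sq_last_sub_sum_castSucc_mulVec_add _ b hε2 hv hεv hεv0, hL_eq]
    exact add_le_add_right (dotProduct_mulVec_le_of_posSemidef_sub hvU w) _

/-- DRIG robustness (Theorem 1): the DRIG population risk `L_γ(b)` equals the worst-case
test risk over all test perturbations `v` (independent of `ε`) whose second-moment matrix
is dominated by `U(γ) = S⁰ + γ ∑ₑ ωᵉ (Sᵉ - S⁰ + μᵉ μᵉᵀ)`. -/
theorem drig_worst_case_risk {p : ℕ} {ι : Type*} [Fintype ι] (e₀ : ι)
    {Ω : Type*} [MeasurableSpace Ω] (P : Measure Ω) [IsProbabilityMeasure P]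
    (B : Matrix (Fin (p + 1)) (Fin (p + 1)) ℝ) (hB : IsUnit (1 - B).det)
    (ε : Ω → Fin (p + 1) → ℝ) (δ : ι → Ω → Fin (p + 1) → ℝ)
    (hε1 : ∀ i, Integrable (fun ω => ε ω i) P)
    (hε2 : ∀ i j, Integrable (fun ω => ε ω i * ε ω j) P)
    (hε0 : ∀ i, ∫ ω, ε ω i ∂P = 0)
    (hδ1 : ∀ e i, Integrable (fun ω => δ e ω i) P)
    (hδ2 : ∀ e i j, Integrable (fun ω => δ e ω i * δ e ω j) P)
    (hεδ : ∀ e i j, Integrable (fun ω => ε ω i * δ e ω j) P)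
    (hεδ0 : ∀ e i j, ∫ ω, ε ω i * δ e ω j ∂P = 0)
    (Z : ι → Ω → Fin (p + 1) → ℝ)
    (hZ : ∀ e ω, Z e ω = B *ᵥ Z e ω + ε ω + δ e ω)
    (ωw : ι → ℝ) (hωpos : ∀ e, 0 < ωw e) (hωsum : ∑ e, ωw e = 1)
    -- means and covariances of the training interventions
    (μv : ι → Fin (p + 1) → ℝ) (hμv : ∀ e i, μv e i = ∫ ω, δ e ω i ∂P)
    (hμ0 : ∀ i, μv e₀ i = 0)
    (S : ι → Matrix (Fin (p + 1)) (Fin (p + 1)) ℝ)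
    (hS : ∀ e, S e = Matrix.of fun i j =>
        (∫ ω, δ e ω i * δ e ω j ∂P) - μv e i * μv e j)
    -- reference-environment dominance assumption
    (hdom : ((∑ e, ωw e • Matrix.of fun i j => ∫ ω, δ e ω i * δ e ω j ∂P)
        - Matrix.of fun i j => ∫ ω, δ e₀ ω i * δ e₀ ω j ∂P).PosSemidef)
    (γ : ℝ) (hγ : 0 ≤ γ) (b : Fin p → ℝ)
    (U : Matrix (Fin (p + 1)) (Fin (p + 1)) ℝ)
    (hU : U = S e₀ + γ • ∑ e, ωw e • (S e - S e₀ + vecMulVec (μv e) (μv e)))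
    (R : ι → Ω → ℝ)
    (hR : ∀ e ω, R e ω = Z e ω (Fin.last p) - ∑ i : Fin p, b i * Z e ω i.castSucc)
    (Lγ : ℝ)
    (hL : Lγ = (∫ ω, (R e₀ ω) ^ 2 ∂P)
        + γ * ∑ e, ωw e * ((∫ ω, (R e ω) ^ 2 ∂P) - ∫ ω, (R e₀ ω) ^ 2 ∂P)) :
    IsLUB { r : ℝ | ∃ v : Ω → Fin (p + 1) → ℝ,
        (∀ i j, Integrable (fun ω => v ω i * v ω j) P) ∧
        (∀ i j, Integrable (fun ω => ε ω i * v ω j) P) ∧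
        (∀ i j, ∫ ω, ε ω i * v ω j ∂P = 0) ∧
        (U - Matrix.of fun i j => ∫ ω, v ω i * v ω j ∂P).PosSemidef ∧
        r = ∫ ω, (((1 - B)⁻¹ *ᵥ (ε ω + v ω)) (Fin.last p)
            - ∑ i : Fin p, b i * ((1 - B)⁻¹ *ᵥ (ε ω + v ω)) i.castSucc) ^ 2 ∂P }
      Lγ :=
  drig_worst_case_risk_general e₀ P B hB ε δ hε1 hε2 hε0 hδ2 hεδ hεδ0 Z hZ ωw hωsum μv hμ0 S hS hdom
    γ hγ b U hU R hR Lγ hL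
end

section
/- Let $\mathcal{E}$ be a finite index set containing $0$, with weights $\omega^e>0$, $\sum_e\omega^e=1$. Suppose random vectors $(X^e, Y^e)$ follow an anchor-regression model: $(X,Y,H)$ satisfies $(X,Y,H) = \tilde{B}^\star(X,Y,H) + \varepsilon + MA$ where $A$ is a discrete anchor taking value $a^e$ with probability $\omega^e$, $a^0 = 0$, and $A \perp \varepsilon$; let $(X^e,Y^e)$ denote $(X,Y)$ conditional on $A = a^e$. Then for every $b \in \mathbb{R}^p$ and $\gamma \ge 0$, the anchor regression loss $\mathcal{L}_{\mathrm{anchor},\gamma}(b) = \mathbb{E}[((I - P_A)(Y - b^\top X))^2] + \gamma\,\mathbb{E}[(P_A(Y - b^\top X))^2]$ equals the DRIG loss $\mathcal{L}_\gamma(b) = \mathbb{E}[(Y^0 - b^\top X^0)^2] + \gamma\sum_e\omega^e\big(\mathbb{E}[(Y^e - b^\top X^e)^2] - \mathbb{E}[(Y^0 - b^\top X^0)^2]\big)$. -/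
open Matrix MeasureTheory Finset

/-- With discrete anchors (deterministic interventions `δ^e = M a^e`), the anchor regression
loss equals the DRIG loss for every `b` and `γ ≥ 0`. -/
theorem anchor_loss_eq_drig_loss {p k : ℕ} {ι : Type*} [Fintype ι] (e₀ : ι)
    {Ω : Type*} [MeasurableSpace Ω] (P : Measure Ω) [IsProbabilityMeasure P]
    (B : Matrix (Fin (p + 1)) (Fin (p + 1)) ℝ) (hB : IsUnit (1 - B).det)
    (ε : Ω → Fin (p + 1) → ℝ)
    (M : Matrix (Fin (p + 1)) (Fin k) ℝ) (a : ι → Fin k → ℝ) (ha0 : a e₀ = 0)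
    (ωw : ι → ℝ) (hωpos : ∀ e, 0 < ωw e) (hωsum : ∑ e, ωw e = 1)
    (Z : ι → Ω → Fin (p + 1) → ℝ)
    (hZ : ∀ e ω, Z e ω = B *ᵥ Z e ω + ε ω + M *ᵥ a e)
    (hε1 : ∀ i, Integrable (fun ω => ε ω i) P)
    (hε2 : ∀ i j, Integrable (fun ω => ε ω i * ε ω j) P)
    (hε0 : ∀ i, ∫ ω, ε ω i ∂P = 0)
    (b : Fin p → ℝ) (γ : ℝ) (hγ : 0 ≤ γ)
    (R : ι → Ω → ℝ)
    (hR : ∀ e ω, R e ω = Z e ω (Fin.last p) - ∑ i : Fin p, b i * Z e ω i.castSucc) :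
    (∑ e, ωw e * ∫ ω, (R e ω - ∫ ω', R e ω' ∂P) ^ 2 ∂P)
        + γ * ∑ e, ωw e * (∫ ω, R e ω ∂P) ^ 2
      = (∫ ω, (R e₀ ω) ^ 2 ∂P)
        + γ * ∑ e, ωw e * ((∫ ω, (R e ω) ^ 2 ∂P) - ∫ ω, (R e₀ ω) ^ 2 ∂P) := by
  set A : Matrix (Fin (p + 1)) (Fin (p + 1)) ℝ := 1 - B with hA
  -- solve for Z
  have hAZ : ∀ e ω, A *ᵥ Z e ω = ε ω + M *ᵥ a e := by
    intro e ω
    rw [hA, Matrix.sub_mulVec, Matrix.one_mulVec]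
    nth_rewrite 1 [hZ e ω]
    abel
  have hZe : ∀ e ω, Z e ω = A⁻¹ *ᵥ (ε ω + M *ᵥ a e) := by
    intro e ω
    rw [← hAZ e ω, Matrix.mulVec_mulVec, Matrix.nonsing_inv_mul A hB, Matrix.one_mulVec]
  set w : Fin (p + 1) → ℝ :=
    fun m => A⁻¹ (Fin.last p) m - ∑ i : Fin p, b i * A⁻¹ i.castSucc m with hw
  set c : ι → ℝ := fun e => ∑ m, w m * (M *ᵥ a e) m with hc
  set S : Ω → ℝ := fun ω => ∑ m, w m * ε ω m with hS
  have key : ∀ e ω, R e ω = S ω + c e := by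
    intro e ω
    have hz : ∀ j, Z e ω j = ∑ m, A⁻¹ j m * (ε ω m + (M *ᵥ a e) m) := by
      intro j; rw [hZe e ω]; rfl
    have h2 : ∑ x : Fin p, b x * ∑ m, A⁻¹ x.castSucc m * (ε ω m + (M *ᵥ a e) m)
        = ∑ m, (∑ x : Fin p, b x * A⁻¹ x.castSucc m) * (ε ω m + (M *ᵥ a e) m) := by
      simp_rw [Finset.mul_sum, Finset.sum_mul]
      rw [Finset.sum_comm]
      exact Finset.sum_congr rfl fun m _ => Finset.sum_congr rfl fun x _ => (mul_assoc _ _ _).symm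
    simp only [hS, hc, hw]
    rw [hR]
    simp only [hz]
    rw [h2, ← Finset.sum_sub_distrib, ← Finset.sum_add_distrib]
    exact Finset.sum_congr rfl fun m _ => by ring
  have hSint : Integrable S P := by
    apply integrable_finset_sum
    intro m _
    exact (hε1 m).const_mul (w m)
  have hS0 : ∫ ω, S ω ∂P = 0 := by
    rw [hS]
    rw [integral_finset_sum _ (fun m _ => (hε1 m).const_mul (w m))]
    simp only [integral_const_mul, hε0, mul_zero, Finset.sum_const_zero]
  have hSsq : (fun ω => S ω ^ 2) = fun ω => ∑ m, ∑ n, (w m * w n) * (ε ω m * ε ω n) := by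
    funext ω
    rw [hS, sq, Finset.sum_mul_sum]
    exact Finset.sum_congr rfl fun m _ => Finset.sum_congr rfl fun n _ => by ring
  have hSsqint : Integrable (fun ω => S ω ^ 2) P := by
    rw [hSsq]
    apply integrable_finset_sum; intro m _
    apply integrable_finset_sum; intro n _
    exact (hε2 m n).const_mul _
  set V : ℝ := ∫ ω, S ω ^ 2 ∂P with hV
  have hc0 : c e₀ = 0 := by
    simp [hc, ha0, Matrix.mulVec_zero]
  have hRint : ∀ e, ∫ ω, R e ω ∂P = c e := by
    intro e
    have : (fun ω => R e ω) = fun ω => S ω + c e := funext (key e)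
    rw [this, integral_add hSint (integrable_const _), hS0, integral_const]
    simp
  have hRsqint : ∀ e, ∫ ω, R e ω ^ 2 ∂P = V + c e ^ 2 := by
    intro e
    have h : ∀ ω, R e ω ^ 2 = S ω ^ 2 + ((2 * c e) * S ω + c e ^ 2) := fun ω => by
      rw [key e ω]; ring
    simp_rw [h]
    have hg1 : Integrable (fun ω => 2 * c e * S ω) P := hSint.const_mul _
    have hg : Integrable (fun ω => 2 * c e * S ω + c e ^ 2) P := hg1.add (integrable_const _)
    rw [integral_add hSsqint hg, integral_add hg1 (integrable_const _),
      integral_const_mul, hS0, integral_const]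
    simp [hV]
  have hVar : ∀ e, ∫ ω, (R e ω - ∫ ω', R e ω' ∂P) ^ 2 ∂P = V := by
    intro e
    have h : (fun ω => (R e ω - ∫ ω', R e ω' ∂P) ^ 2) = fun ω => S ω ^ 2 := by
      funext ω; rw [key e ω, hRint e]; ring
    rw [h, hV]
  simp only [hVar]
  simp only [hRsqint, hRint, hc0]
  rw [← Finset.sum_mul, hωsum]
  have h1 : ∑ e, ωw e * ((V + c e ^ 2) - (V + 0 ^ 2)) = ∑ e, ωw e * c e ^ 2 := by
    exact Finset.sum_congr rfl fun e _ => by ring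
  rw [h1]
  ring
end

section
/- Causal identifiability via DRIG (Corollary 1): In the linear SCM setting with $L^\star = \sum_e\omega^e\mathbb{E}[\delta^e{\delta^e}^\top - \delta^0{\delta^0}^\top]$ and $C^\star = (I-B^\star)^{-1}$, suppose the last coordinate of all interventions vanishes, i.e., $L^\star_{xy} = 0$ and $L^\star_y = 0$, and $L^\star_x \succ 0$. If additionally $C^\star_x$ is invertible, then $[C^\star L^\star {C^\star}^\top]_{1:p,1:p} = C^\star_x L^\star_x {C^\star_x}^\top$ is invertible and the population DRIG solution in the limit $\gamma \to \infty$, given by $b^{\mathrm{opt}}_\infty = b^\star + ([C^\star L^\star {C^\star}^\top]_{1:p,1:p})^{-1}(C^\star_x L^\star_{xy} + L^\star_y C^\star_{xy})$, equals the causal parameter $b^\star$. -/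
open Matrix

/-- Causal identifiability via DRIG: when the interventions do not affect the last coordinate
(`L⋆_{xy} = 0`, `L⋆_y = 0`) and `L⋆ₓ ≻ 0`, `Cₓ` invertible, the `(1:p,1:p)` block of
`C⋆ L⋆ C⋆ᵀ` equals `Cₓ Lₓ Cₓᵀ`, is invertible, and `b^opt_∞ = b⋆`. -/
theorem drig_identifies_causal_parameter {p : ℕ}
    (C L : Matrix (Fin (p + 1)) (Fin (p + 1)) ℝ)
    (hLsym : L.IsSymm)
    (hLy : L (Fin.last p) (Fin.last p) = 0)
    (Cx : Matrix (Fin p) (Fin p) ℝ) (hCx : Cx = C.submatrix Fin.castSucc Fin.castSucc)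
    (Lx : Matrix (Fin p) (Fin p) ℝ) (hLx : Lx = L.submatrix Fin.castSucc Fin.castSucc)
    (Cxy : Fin p → ℝ) (hCxy : ∀ i, Cxy i = C i.castSucc (Fin.last p))
    (Lxy : Fin p → ℝ) (hLxyv : ∀ i, Lxy i = L i.castSucc (Fin.last p))
    (hLxy : ∀ i : Fin p, Lxy i = 0)
    (hLxpd : Lx.PosDef) (hCxinv : IsUnit Cx.det)
    (bstar : Fin p → ℝ) :
    (C * L * Cᵀ).submatrix Fin.castSucc Fin.castSucc = Cx * Lx * Cxᵀ ∧
    IsUnit ((C * L * Cᵀ).submatrix Fin.castSucc Fin.castSucc).det ∧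
    bstar + ((C * L * Cᵀ).submatrix Fin.castSucc Fin.castSucc)⁻¹ *ᵥ
        (Cx *ᵥ Lxy + L (Fin.last p) (Fin.last p) • Cxy) = bstar := by
  have hL0 : ∀ k : Fin p, L k.castSucc (Fin.last p) = 0 := fun k => by
    rw [← hLxyv]; exact hLxy k
  have hL0' : ∀ k : Fin p, L (Fin.last p) k.castSucc = 0 := fun k => by
    rw [← hLsym.apply]; exact hL0 k
  have hblock : (C * L * Cᵀ).submatrix Fin.castSucc Fin.castSucc = Cx * Lx * Cxᵀ := by
    ext i j
    simp only [submatrix_apply, mul_apply, transpose_apply, hCx, hLx]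
    simp only [Fin.sum_univ_castSucc, hL0, hL0', hLy, mul_zero, zero_mul,
      add_zero, Finset.sum_const_zero]
  refine ⟨hblock, ?_, ?_⟩
  · rw [hblock]
    simp only [det_mul, det_transpose]
    exact (hCxinv.mul (isUnit_iff_ne_zero.mpr hLxpd.det_pos.ne')).mul hCxinv
  · have h1 : Cx *ᵥ Lxy = 0 := by
      have : Lxy = 0 := funext hLxy
      simp [this]
    rw [h1, hLy, zero_smul, zero_add, mulVec_zero, add_zero]
end
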